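/- Let $K$ be a number field, $F \in \mathcal{O}_K[x,y]$ a binary cubic with nonzero discriminant $\Delta_F$, and $S_F$ a finite set of primes containing all primes dividing $2\Delta_F$. Let $E/K$ be an elliptic curve whose conductor is supported on $S_F$ and suppose $j(E) = -2^8 H(x_1,y_1)^3/(\Delta_F F(x_1,y_1)^2)$ for some $x_1, y_1 \in \mathcal{O}_K$ coprime outside $S_F$ with $F(x_1,y_1) \neq 0$. Then $F(x_1,y_1)$ is an $S_F$-unit of $\mathcal{O}_K$. -/

import Mathlib

open MvPolynomial NumberField IsDedekindDomain

/-!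
Suppose a prime `v ∉ S_F` divides `F(x₁,y₁)`. Since `j(E)` is `v`-integral and `2Δ_F` is a
`v`-unit, `v` must also divide `H(x₁,y₁)`. But the cubic form and its Hessian have resultant
`-Δ_F²`: explicit combinations of `F` and `H` equal `-(2Δ_F y²)²` and `-(2Δ_F x²)²`, so `v`
divides both `x₁` and `y₁`, contradicting their coprimality outside `S_F`.
-/

theorem MvPolynomial.pderiv_ofNat {R σ : Type*} [CommSemiring R] (i : σ) (n : ℕ) [n.AtLeastTwo] :
    pderiv i (ofNat(n) : MvPolynomial σ R) = 0 :=
  Derivation.map_natCast _ n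

theorem IsDedekindDomain.HeightOneSpectrum.mem_asIdeal_of_valuation_div_le_one {R K : Type*}
    [CommRing R] [IsDedekindDomain R] [Field K] [Algebra R K] [IsFractionRing R K]
    (v : HeightOneSpectrum R) {a b : R} (hb0 : b ≠ 0) (hb : b ∈ v.asIdeal)
    (h : v.valuation K (algebraMap R K a / algebraMap R K b) ≤ 1) : a ∈ v.asIdeal := by
  by_contra ha
  exact (v.valuation_div_le_one_iff K a hb0 fun _ ↦ ha).1 h hb

section BinaryCubic

variable {R : Type*} [CommRing R]

def binaryCubic (a₀ a₁ a₂ a₃ x y : R) : R :=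
  a₀ * x ^ 3 + a₁ * x ^ 2 * y + a₂ * x * y ^ 2 + a₃ * y ^ 3

def cubicHessian (a₀ a₁ a₂ a₃ x y : R) : R :=
  (3 * a₀ * a₂ - a₁ ^ 2) * x ^ 2 + (9 * a₀ * a₃ - a₁ * a₂) * x * y + (3 * a₁ * a₃ - a₂ ^ 2) * y ^ 2

def cubicDisc (a₀ a₁ a₂ a₃ : R) : R :=
  18 * a₀ * a₁ * a₂ * a₃ + (a₁ * a₂) ^ 2 - 27 * (a₀ * a₃) ^ 2 - 4 * a₀ * a₂ ^ 3 - 4 * a₁ ^ 3 * a₃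

theorem binaryCubic_swap (a₀ a₁ a₂ a₃ x y : R) :
    binaryCubic a₃ a₂ a₁ a₀ y x = binaryCubic a₀ a₁ a₂ a₃ x y := by
  unfold binaryCubic; ring

theorem cubicHessian_swap (a₀ a₁ a₂ a₃ x y : R) :
    cubicHessian a₃ a₂ a₁ a₀ y x = cubicHessian a₀ a₁ a₂ a₃ x y := by
  unfold cubicHessian; ring

theorem cubicDisc_swap (a₀ a₁ a₂ a₃ : R) : cubicDisc a₃ a₂ a₁ a₀ = cubicDisc a₀ a₁ a₂ a₃ := by
  unfold cubicDisc; ring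

theorem eval_binaryCubic (a₀ a₁ a₂ a₃ x y : R) :
    eval ![x, y] (C a₀ * X 0 ^ 3 + C a₁ * X 0 ^ 2 * X 1 + C a₂ * X 0 * X 1 ^ 2 + C a₃ * X 1 ^ 3 :
      MvPolynomial (Fin 2) R) = binaryCubic a₀ a₁ a₂ a₃ x y := by
  simp [binaryCubic]

theorem eval_hessianDet_binaryCubic {a₀ a₁ a₂ a₃ : R} {F : MvPolynomial (Fin 2) R}
    (hF : F = C a₀ * X 0 ^ 3 + C a₁ * X 0 ^ 2 * X 1 + C a₂ * X 0 * X 1 ^ 2 + C a₃ * X 1 ^ 3)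
    (x y : R) :
    eval ![x, y] (pderiv 0 (pderiv 0 F) * pderiv 1 (pderiv 1 F) - pderiv 1 (pderiv 0 F) ^ 2) =
      4 * cubicHessian a₀ a₁ a₂ a₃ x y := by
  subst hF
  simp [pderiv_X, pderiv_ofNat, cubicHessian]
  ring

/-- A Bézout identity for the resultant `Res(H, F) = -Δ²`. -/
theorem exists_mul_binaryCubic_add_mul_cubicHessian_eq (a₀ a₁ a₂ a₃ x y : R) :
    ∃ U V : R, U * binaryCubic a₀ a₁ a₂ a₃ x y + V * cubicHessian a₀ a₁ a₂ a₃ x y =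
      -(2 * cubicDisc a₀ a₁ a₂ a₃ * y ^ 2) ^ 2 :=
  ⟨4 * ((-3*a₀*a₁^4*a₂^2 + 12*a₀*a₁^5*a₃ + 21*a₀^2*a₁^2*a₂^3 - 90*a₀^2*a₁^3*a₂*a₃
        - 36*a₀^3*a₂^4 + 162*a₀^3*a₁*a₂^2*a₃ + 81*a₀^3*a₁^2*a₃^2 - 243*a₀^4*a₂*a₃^2)*x
      + (a₁^5*a₂^2 - 4*a₁^6*a₃ - 10*a₀*a₁^3*a₂^3 + 42*a₀*a₁^4*a₂*a₃ + 24*a₀^2*a₁*a₂^4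
        - 81*a₀^2*a₁^2*a₂^2*a₃ - 135*a₀^2*a₁^3*a₃^2 - 108*a₀^3*a₂^3*a₃ + 648*a₀^3*a₁*a₂*a₃^2
        - 729*a₀^4*a₃^3)*y),
    4 * ((-3*a₀^2*a₁^2*a₂^2 + 12*a₀^2*a₁^3*a₃ + 12*a₀^3*a₂^3 - 54*a₀^3*a₁*a₂*a₃
        + 81*a₀^4*a₃^2)*x^2
      + (-2*a₀*a₁^3*a₂^2 + 8*a₀*a₁^4*a₃ + 8*a₀^2*a₁*a₂^3 - 36*a₀^2*a₁^2*a₂*a₃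
        + 54*a₀^3*a₁*a₃^2)*x*y
      + (a₁^4*a₂^2 - 4*a₁^5*a₃ - 8*a₀*a₁^2*a₂^3 + 34*a₀*a₁^3*a₂*a₃ + 16*a₀^2*a₂^4
        - 72*a₀^2*a₁*a₂^2*a₃ - 27*a₀^2*a₁^2*a₃^2 + 108*a₀^3*a₂*a₃^2)*y^2),
    by unfold binaryCubic cubicHessian cubicDisc; ring⟩

theorem mem_of_binaryCubic_mem_of_cubicHessian_mem {P : Ideal R} [hP : P.IsPrime]
    {a₀ a₁ a₂ a₃ x y : R} (hΔ : 2 * cubicDisc a₀ a₁ a₂ a₃ ∉ P)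
    (hF : binaryCubic a₀ a₁ a₂ a₃ x y ∈ P) (hH : cubicHessian a₀ a₁ a₂ a₃ x y ∈ P) : y ∈ P := by
  obtain ⟨U, V, hUV⟩ := exists_mul_binaryCubic_add_mul_cubicHessian_eq a₀ a₁ a₂ a₃ x y
  have hmem : (2 * cubicDisc a₀ a₁ a₂ a₃ * y ^ 2) ^ 2 ∈ P := by
    rw [← neg_mem_iff, ← hUV]
    exact P.add_mem (P.mul_mem_left U hF) (P.mul_mem_left V hH)
  obtain h | h := hP.mem_or_mem (hP.mem_of_pow_mem 2 hmem)
  · exact absurd h hΔ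
  · exact hP.mem_of_pow_mem 2 h

theorem mem_and_mem_of_binaryCubic_mem_of_cubicHessian_mem {P : Ideal R} [P.IsPrime]
    {a₀ a₁ a₂ a₃ x y : R} (hΔ : 2 * cubicDisc a₀ a₁ a₂ a₃ ∉ P)
    (hF : binaryCubic a₀ a₁ a₂ a₃ x y ∈ P) (hH : cubicHessian a₀ a₁ a₂ a₃ x y ∈ P) :
    x ∈ P ∧ y ∈ P := by
  refine ⟨?_, mem_of_binaryCubic_mem_of_cubicHessian_mem hΔ hF hH⟩
  rw [← binaryCubic_swap] at hF
  rw [← cubicHessian_swap] at hH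
  rw [← cubicDisc_swap] at hΔ
  exact mem_of_binaryCubic_mem_of_cubicHessian_mem hΔ hF hH

end BinaryCubic

theorem value_is_S_unit_general (K : Type*) [Field K] [NumberField K]
    (α₀ α₁ α₂ α₃ : 𝓞 K)
    (F : MvPolynomial (Fin 2) (𝓞 K))
    (hF : F = C α₀ * X 0 ^ 3 + C α₁ * X 0 ^ 2 * X 1 + C α₂ * X 0 * X 1 ^ 2 + C α₃ * X 1 ^ 3)
    (Δ : 𝓞 K)
    (hΔ : Δ = 18 * α₀ * α₁ * α₂ * α₃ + (α₁ * α₂) ^ 2 - 27 * (α₀ * α₃) ^ 2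
      - 4 * α₀ * α₂ ^ 3 - 4 * α₁ ^ 3 * α₃)
    (H : MvPolynomial (Fin 2) (𝓞 K))
    (hH : C 4 * H = pderiv 0 (pderiv 0 F) * pderiv 1 (pderiv 1 F) - pderiv 1 (pderiv 0 F) ^ 2)
    (S : Set (HeightOneSpectrum (𝓞 K)))
    (hS2Δ : ∀ v : HeightOneSpectrum (𝓞 K), 2 * Δ ∈ v.asIdeal → v ∈ S)
    (E : WeierstrassCurve K)
    -- the conductor of `E` is supported on `S_F`: no potentially multiplicative
    -- reduction outside `S_F`, i.e. the `j`-invariant is integral at every `v ∉ S_F`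
    (hcond : ∀ v : HeightOneSpectrum (𝓞 K), v ∉ S → v.valuation K (E.c₄ ^ 3 / E.Δ) ≤ 1)
    (x₁ y₁ : 𝓞 K)
    (hcop : ∀ v : HeightOneSpectrum (𝓞 K), v ∉ S → ¬(x₁ ∈ v.asIdeal ∧ y₁ ∈ v.asIdeal))
    (hF0 : MvPolynomial.eval ![x₁, y₁] F ≠ 0)
    (hj : E.c₄ ^ 3 / E.Δ =
      algebraMap (𝓞 K) K (-2 ^ 8 * MvPolynomial.eval ![x₁, y₁] H ^ 3) /
        algebraMap (𝓞 K) K (Δ * MvPolynomial.eval ![x₁, y₁] F ^ 2)) :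
    ∀ v : HeightOneSpectrum (𝓞 K), v ∉ S →
      v.intValuation (MvPolynomial.eval ![x₁, y₁] F) = 1 := by
  intro v hv
  have hΔ' : Δ = cubicDisc α₀ α₁ α₂ α₃ := hΔ
  have hFxy : eval ![x₁, y₁] F = binaryCubic α₀ α₁ α₂ α₃ x₁ y₁ := by rw [hF, eval_binaryCubic]
  have hHxy : eval ![x₁, y₁] H = cubicHessian α₀ α₁ α₂ α₃ x₁ y₁ := by
    have h4H := congrArg (eval ![x₁, y₁]) hH
    rw [map_mul, eval_C, eval_hessianDet_binaryCubic hF] at h4H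
    exact mul_left_cancel₀ (by norm_num) h4H
  have h2Δ : 2 * Δ ∉ v.asIdeal := mt (hS2Δ v) hv
  have hΔv : Δ ∉ v.asIdeal := fun h ↦ h2Δ (v.asIdeal.mul_mem_left 2 h)
  have hΔ0 : Δ ≠ 0 := fun h ↦ hΔv (h ▸ v.asIdeal.zero_mem)
  rw [HeightOneSpectrum.intValuation_eq_one_iff]
  intro hFv
  have hnum : -2 ^ 8 * eval ![x₁, y₁] H ^ 3 ∈ v.asIdeal :=
    v.mem_asIdeal_of_valuation_div_le_one
      (mul_ne_zero hΔ0 (pow_ne_zero 2 hF0))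
      (v.asIdeal.mul_mem_left Δ (v.asIdeal.pow_mem_of_mem hFv 2 two_pos)) (hj ▸ hcond v hv)
  have hHv : eval ![x₁, y₁] H ∈ v.asIdeal := by
    rw [neg_mul, neg_mem_iff] at hnum
    obtain h | h := v.isPrime.mem_or_mem hnum
    · exact absurd (v.asIdeal.mul_mem_right Δ (v.isPrime.mem_of_pow_mem 8 h)) h2Δ
    · exact v.isPrime.mem_of_pow_mem 3 h
  exact hcop v hv <| mem_and_mem_of_binaryCubic_mem_of_cubicHessian_mem (hΔ' ▸ h2Δ)
    (hFxy ▸ hFv) (hHxy ▸ hHv)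

/-- **Lemma (conds).** Let `K` be a number field, `F ∈ 𝓞 K[x,y]` a binary cubic with
nonzero discriminant `Δ_F`, and `S_F` a finite set of (finite) primes of `K` containing all
primes dividing `2Δ_F`. Let `E/K` be an elliptic curve whose conductor is supported on
`S_F` (equivalently, by semistability considerations, whose `j`-invariant `c₄³/Δ` is
integral at every prime outside `S_F`), and suppose
`j(E) = -2⁸H(x₁,y₁)³/(Δ_F·F(x₁,y₁)²)` for some `x₁, y₁ ∈ 𝓞 K` coprime outside `S_F` with
`F(x₁,y₁) ≠ 0`. Then `F(x₁,y₁)` is an `S_F`-unit: `v(F(x₁,y₁)) = 0` for every prime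
`v ∉ S_F`. -/
theorem value_is_S_unit (K : Type*) [Field K] [NumberField K]
    (α₀ α₁ α₂ α₃ : 𝓞 K)
    (F : MvPolynomial (Fin 2) (𝓞 K))
    (hF : F = C α₀ * X 0 ^ 3 + C α₁ * X 0 ^ 2 * X 1 + C α₂ * X 0 * X 1 ^ 2 + C α₃ * X 1 ^ 3)
    (Δ : 𝓞 K)
    (hΔ : Δ = 18 * α₀ * α₁ * α₂ * α₃ + (α₁ * α₂) ^ 2 - 27 * (α₀ * α₃) ^ 2
      - 4 * α₀ * α₂ ^ 3 - 4 * α₁ ^ 3 * α₃)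
    (hΔ0 : Δ ≠ 0)
    (H : MvPolynomial (Fin 2) (𝓞 K))
    (hH : C 4 * H = pderiv 0 (pderiv 0 F) * pderiv 1 (pderiv 1 F) - pderiv 1 (pderiv 0 F) ^ 2)
    (S : Set (HeightOneSpectrum (𝓞 K))) (hSfin : S.Finite)
    (hS2Δ : ∀ v : HeightOneSpectrum (𝓞 K), 2 * Δ ∈ v.asIdeal → v ∈ S)
    (E : WeierstrassCurve K) (hE : E.IsElliptic)
    -- the conductor of `E` is supported on `S_F`: no potentially multiplicative
    -- reduction outside `S_F`, i.e. the `j`-invariant is integral at every `v ∉ S_F`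
    (hcond : ∀ v : HeightOneSpectrum (𝓞 K), v ∉ S → v.valuation K (E.c₄ ^ 3 / E.Δ) ≤ 1)
    (x₁ y₁ : 𝓞 K)
    (hcop : ∀ v : HeightOneSpectrum (𝓞 K), v ∉ S → ¬(x₁ ∈ v.asIdeal ∧ y₁ ∈ v.asIdeal))
    (hF0 : MvPolynomial.eval ![x₁, y₁] F ≠ 0)
    (hj : E.c₄ ^ 3 / E.Δ =
      algebraMap (𝓞 K) K (-2 ^ 8 * MvPolynomial.eval ![x₁, y₁] H ^ 3) /
        algebraMap (𝓞 K) K (Δ * MvPolynomial.eval ![x₁, y₁] F ^ 2)) :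
    ∀ v : HeightOneSpectrum (𝓞 K), v ∉ S →
      v.intValuation (MvPolynomial.eval ![x₁, y₁] F) = 1 :=
  value_is_S_unit_general K α₀ α₁ α₂ α₃ F hF Δ hΔ H hH S hS2Δ E hcond x₁ y₁ hcop hF0 hj
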